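/- arXiv:1810.08792 — 2 statements merged into one kernel-verified Lean document; each statement's English description precedes it below -/
import Mathlib

section
/- For every integer k ≥ 0, the subgraph C_k of complete lines of the Sierpiński graph Γ_k has exactly 2·6^k − 4^k vertices. -/
open scoped Classical

/-- Reachability within the subgraph of `X` induced on a vertex set `s`. -/
def SimpleGraph.ReachIn {V : Type*} (X : SimpleGraph V) (s : Set V) (v w : V) : Prop :=
  ∃ (hv : v ∈ s) (hw : w ∈ s), (X.induce s).Reachable ⟨v, hv⟩ ⟨w, hw⟩

/-- The vertex set of the connected component of `v` in the subgraph of `X` induced on `s`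
(empty if `v ∉ s`). -/
def SimpleGraph.compIn {V : Type*} (X : SimpleGraph V) (s : Set V) (v : V) : Set V :=
  {w | X.ReachIn s v w}

/-- `T` is a vertex set witnessing `cut¹ᐟ²` for the subgraph of `X` induced on the finite
vertex set `G`: after removing `T` from `G`, every connected component has at most
`|G|/2` vertices. -/
def IsHalfCutSet {V : Type*} (X : SimpleGraph V) (G T : Finset V) : Prop :=
  T ⊆ G ∧ ∀ v : V, 2 * (X.compIn (↑(G \ T)) v).ncard ≤ G.card

/-- `cut¹ᐟ²` of the subgraph of `X` induced on the finite vertex set `G`: the least size of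
a vertex set whose removal leaves all connected components of size at most `|G|/2`. -/
noncomputable def cutHalf {V : Type*} (X : SimpleGraph V) (G : Finset V) : ℕ :=
  sInf {t | ∃ T : Finset V, IsHalfCutSet X G T ∧ T.card = t}

/-- The `1/2`-separation profile of `X`, over finite subgraphs with vertex set inside `W`. -/
noncomputable def sepHalf {V : Type*} (X : SimpleGraph V) (W : Set V) (n : ℕ) : ℕ :=
  sSup {c | ∃ G : Finset V, ↑G ⊆ W ∧ G.card ≤ n ∧ c = cutHalf X G}

/-- The `i`-th digit of `x` in base `b`. -/
def digit (b i x : ℕ) : ℕ := x / b ^ i % b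

/-- Membership in the vertex set of the infinite Sierpinski graph: no position at which
both coordinates have base-3 digit `1`. -/
def SierpMem (p : ℕ × ℕ) : Prop :=
  ∀ i : ℕ, ¬(digit 3 i p.1 = 1 ∧ digit 3 i p.2 = 1)

/-- The infinite Sierpinski graph `S`, with edges between valid points at `ℓ¹`-distance 1. -/
def SierpGraph : SimpleGraph (ℕ × ℕ) where
  Adj p q := SierpMem p ∧ SierpMem q ∧ |(p.1 : ℤ) - q.1| + |(p.2 : ℤ) - q.2| = 1
  symm := by
    constructor
    rintro p q ⟨hp, hq, h⟩
    exact ⟨hq, hp, by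
      rw [abs_sub_comm (q.1 : ℤ) (p.1 : ℤ), abs_sub_comm (q.2 : ℤ) (p.2 : ℤ)]; exact h⟩
  loopless := by constructor; rintro p ⟨-, -, h⟩; simp at h

/-- The vertex set of the sphere `Γ_k`. -/
noncomputable def GammaV (k : ℕ) : Finset (ℕ × ℕ) :=
  (Finset.range (3 ^ k) ×ˢ Finset.range (3 ^ k)).filter SierpMem

/-- The intersection of the vertical line `V_x` with `Γ_k`. -/
def VlineSet (k x : ℕ) : Set (ℕ × ℕ) := {p | p ∈ GammaV k ∧ p.1 = x}

/-- The intersection of the horizontal line `H_y` with `Γ_k`. -/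
def HlineSet (k y : ℕ) : Set (ℕ × ℕ) := {p | p ∈ GammaV k ∧ p.2 = y}

/-- The vertical line `V_x` is complete in `Γ_k`: its intersection with `Γ_k` is connected. -/
def CompleteV (k x : ℕ) : Prop := (SierpGraph.induce (VlineSet k x)).Connected

/-- The horizontal line `H_y` is complete in `Γ_k`: its intersection with `Γ_k` is connected. -/
def CompleteH (k y : ℕ) : Prop := (SierpGraph.induce (HlineSet k y)).Connected

/-- The vertex set of the complete-lines subgraph `C_k` of `Γ_k`. -/
noncomputable def CkV (k : ℕ) : Finset (ℕ × ℕ) :=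
  (GammaV k).filter fun p => CompleteV k p.1 ∨ CompleteH k p.2

/-!
A vertical line `V_x` is complete in `Γ_k` exactly when `x < 3^k` has no ternary digit `1`:
then the line meets `Γ_k` in the full column `{x} × [0, 3^k)`, while a digit `1` of `x` at
position `i` removes the point `(x, 3^i)` and so separates `(x, 0)` from `(x, 2·3^i)`.
Swapping coordinates gives the same for horizontal lines. With `A` the `2^k` admissible
coordinates, the vertex set of `C_k` is `A × [0, 3^k) ∪ [0, 3^k) × A`, and inclusion–exclusion
gives `2·2^k·3^k − 2^k·2^k`.
-/

open Finset

def AvoidsDigitOne (x : ℕ) : Prop := ∀ i, digit 3 i x ≠ 1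

lemma digit_succ (b i x : ℕ) : digit b (i + 1) x = digit b i (x / b) := by
  simp [digit, Nat.div_div_eq_div_mul, pow_succ, mul_comm]

lemma digit_pow_self {b : ℕ} (hb : 1 < b) (i : ℕ) : digit b i (b ^ i) = 1 := by
  rw [digit, Nat.div_self (pow_pos (by omega) i), Nat.mod_eq_of_lt hb]

lemma lt_of_digit_ne_zero {b i k x : ℕ} (hb : 0 < b) (hx : x < b ^ k) (h : digit b i x ≠ 0) :
    i < k := by
  by_contra! hik
  exact h (by simp [digit, Nat.div_eq_of_lt (hx.trans_le (Nat.pow_le_pow_right hb hik))])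

lemma avoidsDigitOne_iff {x : ℕ} :
    AvoidsDigitOne x ↔ x % 3 ≠ 1 ∧ AvoidsDigitOne (x / 3) := by
  refine ⟨fun h => ⟨by simpa [digit] using h 0, fun i => digit_succ 3 i x ▸ h (i + 1)⟩, ?_⟩
  rintro ⟨h0, h⟩ (_ | i)
  · simpa [digit] using h0
  · exact digit_succ 3 i x ▸ h i

lemma avoidsDigitOne_zero : AvoidsDigitOne 0 := by simp [AvoidsDigitOne, digit]

lemma avoidsDigitOne_two_mul_pow (i : ℕ) : AvoidsDigitOne (2 * 3 ^ i) := by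
  induction i with
  | zero => exact avoidsDigitOne_iff.mpr ⟨by norm_num, avoidsDigitOne_zero⟩
  | succ i ih =>
    refine avoidsDigitOne_iff.mpr ⟨by simp [pow_succ, ← mul_assoc], ?_⟩
    rwa [pow_succ, ← mul_assoc, Nat.mul_div_cancel _ (by norm_num)]

lemma card_filter_avoidsDigitOne_range (k : ℕ) :
    #{x ∈ range (3 ^ k) | AvoidsDigitOne x} = 2 ^ k := by
  induction k with
  | zero =>
    rw [pow_zero, range_one, filter_singleton, if_pos avoidsDigitOne_zero, card_singleton,
      pow_zero]
  | succ k ih =>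
    have hsplit : #{x ∈ range (3 ^ (k + 1)) | AvoidsDigitOne x}
        = #(({0, 2} : Finset ℕ) ×ˢ {x ∈ range (3 ^ k) | AvoidsDigitOne x}) := by
      refine card_nbij' (fun x => (x % 3, x / 3)) (fun p => p.1 + 3 * p.2) ?_ ?_ ?_ ?_
      · intro x hx
        simp only [coe_filter, coe_product, Set.mem_ofPred_eq, Set.mem_prod, mem_coe, mem_insert,
          mem_singleton, mem_range, pow_succ, avoidsDigitOne_iff (x := x)] at hx ⊢
        exact ⟨by omega, by omega, hx.2.2⟩
      · rintro ⟨d, y⟩ hp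
        simp only [coe_filter, coe_product, Set.mem_ofPred_eq, Set.mem_prod, mem_coe, mem_insert,
          mem_singleton, mem_range, pow_succ] at hp ⊢
        refine ⟨by omega, avoidsDigitOne_iff.mpr ⟨by omega, ?_⟩⟩
        rw [show (d + 3 * y) / 3 = y by omega]
        exact hp.2.2
      · exact fun x _ => Nat.mod_add_div x 3
      · rintro ⟨d, y⟩ hp
        simp only [coe_filter, coe_product, Set.mem_ofPred_eq, Set.mem_prod, mem_coe, mem_insert,
          mem_singleton] at hp
        ext <;> dsimp only <;> omega
    rw [hsplit, card_product, ih, pow_succ, mul_comm]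
    rfl

lemma mem_GammaV {k : ℕ} {p : ℕ × ℕ} :
    p ∈ GammaV k ↔ p.1 < 3 ^ k ∧ p.2 < 3 ^ k ∧ SierpMem p := by
  simp [GammaV, and_assoc]

lemma sierpMem_swap {p : ℕ × ℕ} : SierpMem p.swap ↔ SierpMem p := by
  simp [SierpMem, and_comm]

lemma sierpMem_of_avoidsDigitOne_left {x : ℕ} (hx : AvoidsDigitOne x) (y : ℕ) :
    SierpMem (x, y) :=
  fun i hi => hx i hi.1

lemma sierpMem_of_avoidsDigitOne_right {y : ℕ} (hy : AvoidsDigitOne y) (x : ℕ) :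
    SierpMem (x, y) :=
  fun i hi => hy i hi.2

def sierpGraphSwap : SierpGraph ≃g SierpGraph where
  toEquiv := Equiv.prodComm ℕ ℕ
  map_rel_iff' := by
    simp [SierpGraph, sierpMem_swap, add_comm]

lemma completeV_iff_completeH (k x : ℕ) : CompleteV k x ↔ CompleteH k x :=
  SimpleGraph.Iso.connected_iff <| sierpGraphSwap.induce <| Equiv.bijOn _ fun p => by
    simp [VlineSet, HlineSet, sierpGraphSwap, mem_GammaV, sierpMem_swap, and_left_comm]

lemma SierpGraph.succ_snd_eq_or_of_adj {p q : ℕ × ℕ} (h : SierpGraph.Adj p q)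
    (h1 : p.1 = q.1) : p.2 + 1 = q.2 ∨ q.2 + 1 = p.2 := by
  obtain ⟨-, -, h⟩ := h
  rw [h1, sub_self, abs_zero, zero_add, abs_eq zero_le_one] at h
  omega

lemma completeV_of_avoidsDigitOne {k x : ℕ} (hxk : x < 3 ^ k) (hx : AvoidsDigitOne x) :
    CompleteV k x := by
  have hmem (y : Fin (3 ^ k)) : (x, (y : ℕ)) ∈ VlineSet k x :=
    ⟨mem_GammaV.mpr ⟨hxk, y.isLt, sierpMem_of_avoidsDigitOne_left hx y⟩, rfl⟩
  let column : SimpleGraph.pathGraph (3 ^ k) →g SierpGraph.induce (VlineSet k x) :=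
    { toFun y := ⟨_, hmem y⟩
      map_rel' {u v} h := by
        refine ⟨sierpMem_of_avoidsDigitOne_left hx _, sierpMem_of_avoidsDigitOne_left hx _, ?_⟩
        rw [SimpleGraph.pathGraph_adj] at h
        show |(x : ℤ) - x| + |((u : ℕ) : ℤ) - (v : ℕ)| = 1
        rw [sub_self, abs_zero, zero_add, abs_eq zero_le_one]
        omega }
  have hsurj : Function.Surjective column := by
    rintro ⟨⟨x', y⟩, hp, rfl : x' = x⟩
    exact ⟨⟨y, (mem_GammaV.mp hp).2.1⟩, rfl⟩
  have : Nonempty (VlineSet k x) := ⟨column ⟨0, by positivity⟩⟩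
  exact ⟨(SimpleGraph.pathGraph_preconnected _).map column hsurj⟩

lemma lt_of_completeV {k x : ℕ} (h : CompleteV k x) : x < 3 ^ k := by
  obtain ⟨⟨p, hp, rfl⟩⟩ := h.nonempty
  exact (mem_GammaV.mp hp).1

lemma avoidsDigitOne_of_completeV {k x : ℕ} (h : CompleteV k x) : AvoidsDigitOne x := by
  have hxk := lt_of_completeV h
  intro i hi
  have hik : i < k := lt_of_digit_ne_zero (by norm_num) hxk (by omega)
  have hlt : 2 * 3 ^ i < 3 ^ k :=
    calc 2 * 3 ^ i < 3 ^ (i + 1) := by rw [pow_succ, mul_comm]; gcongr; norm_num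
      _ ≤ 3 ^ k := Nat.pow_le_pow_right (by norm_num) hik
  let bottom : VlineSet k x := ⟨(x, 0), mem_GammaV.mpr ⟨hxk, by positivity,
    sierpMem_of_avoidsDigitOne_right avoidsDigitOne_zero x⟩, rfl⟩
  let top : VlineSet k x := ⟨(x, 2 * 3 ^ i), mem_GammaV.mpr ⟨hxk, hlt,
    sierpMem_of_avoidsDigitOne_right (avoidsDigitOne_two_mul_pow i) x⟩, rfl⟩
  -- a path up the line from `bottom` to `top` would have to step onto `(x, 3^i)`
  obtain ⟨d, -, hd_lt, hd_ge⟩ := (h.preconnected bottom top).some.exists_boundary_dart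
    {v | v.1.2 < 3 ^ i} (by simp [bottom]) (by simp [top])
  have hd : d.snd.1.2 = 3 ^ i := by
    have hadj : SierpGraph.Adj d.fst.1 d.snd.1 := d.adj
    have := SierpGraph.succ_snd_eq_or_of_adj hadj (d.fst.2.2.trans d.snd.2.2.symm)
    simp only [Set.mem_ofPred_eq] at hd_lt hd_ge
    omega
  refine (mem_GammaV.mp d.snd.2.1).2.2 i ⟨?_, ?_⟩
  · rwa [d.snd.2.2]
  · rw [hd, digit_pow_self (by norm_num)]

lemma completeV_iff (k x : ℕ) : CompleteV k x ↔ x < 3 ^ k ∧ AvoidsDigitOne x :=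
  ⟨fun h => ⟨lt_of_completeV h, avoidsDigitOne_of_completeV h⟩,
    fun h => completeV_of_avoidsDigitOne h.1 h.2⟩

lemma completeH_iff (k y : ℕ) : CompleteH k y ↔ y < 3 ^ k ∧ AvoidsDigitOne y :=
  (completeV_iff_completeH k y).symm.trans (completeV_iff k y)

lemma CkV_eq (k : ℕ) :
    CkV k = {x ∈ range (3 ^ k) | AvoidsDigitOne x} ×ˢ range (3 ^ k) ∪
      range (3 ^ k) ×ˢ {y ∈ range (3 ^ k) | AvoidsDigitOne y} := by
  ext ⟨x, y⟩
  simp only [CkV, mem_filter, mem_GammaV, completeV_iff, completeH_iff, mem_union, mem_product,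
    mem_range]
  constructor
  · rintro ⟨⟨hx, hy, -⟩, hV | hH⟩
    · exact .inl ⟨hV, hy⟩
    · exact .inr ⟨hx, hH⟩
  · rintro (⟨hV, hy⟩ | ⟨hx, hH⟩)
    · exact ⟨⟨hV.1, hy, sierpMem_of_avoidsDigitOne_left hV.2 y⟩, .inl hV⟩
    · exact ⟨⟨hx, hH.1, sierpMem_of_avoidsDigitOne_right hH.2 x⟩, .inr hH⟩

/-- The complete-lines subgraph `C_k` of `Γ_k` has exactly `2·6^k − 4^k` vertices. -/
theorem card_CkV (k : ℕ) : (CkV k).card = 2 * 6 ^ k - 4 ^ k := by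
  have hA : {x ∈ range (3 ^ k) | AvoidsDigitOne x} ⊆ range (3 ^ k) := filter_subset _ _
  rw [CkV_eq, card_union, product_inter_product, inter_eq_left.mpr hA, inter_eq_right.mpr hA,
    card_product, card_product, card_product, card_range, card_filter_avoidsDigitOne_range,
    show 6 = 2 * 3 by rfl, show 4 = 2 * 2 by rfl, mul_pow, mul_pow]
  congr 1
  ring
end

section
/- Let Γ be a finite subgraph of the infinite Sierpiński graph S on q·6^k + r vertices, where 0 ≤ q < 6 and 0 ≤ r < 6^k. Then there exists a set T of vertices of Γ with |T| ≤ 24·2^k such that Γ − T has at most one connected component with more than |Γ|/2 vertices, and any such component is contained in a square of side length 3^k (i.e. in a set of the form [a, a+3^k] × [c, c+3^k]). -/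
open scoped Classical

/-!
Only the grid geometry of `S` matters: an edge changes each coordinate by at most one, so a
connected vertex set avoiding the line `x = t` lies on one side of it. Let `m` be a median of
the `x`-coordinates of `G`. The `3^k` pairs of lines `x = t`, `x = t + 3^k + 1` with
`m - 3^k < t ≤ m` are pairwise disjoint, and `|G| < 12·6^k`, so some pair meets fewer than
`12·2^k` points of `G`. A component of `G` minus these lines with more than `|G|/2` vertices
cannot lie left of `x = t` or right of `x = t + 3^k + 1`, since each of these sides lies beyond
the median and so holds at most half of `G`; hence it lies strictly between the two lines.
Doing the same for horizontal lines gives `T`, and two components with more than `|G|/2`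
vertices must meet.
-/

open Finset Function

theorem Set.ncard_le_card_of_subset_finset {α : Type*} {s : Set α} {F : Finset α}
    (h : s ⊆ F) : s.ncard ≤ #F :=
  (Set.ncard_le_ncard h F.finite_toSet).trans_eq (Set.ncard_coe_finset F)

namespace SimpleGraph

variable {V : Type*} {X : SimpleGraph V} {s : Set V} {u v w : V}

theorem ReachIn.symm (h : X.ReachIn s v w) : X.ReachIn s w v := by
  obtain ⟨hv, hw, hr⟩ := h
  exact ⟨hw, hv, hr.symm⟩

theorem ReachIn.trans (h₁ : X.ReachIn s u v) (h₂ : X.ReachIn s v w) : X.ReachIn s u w := by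
  obtain ⟨hu, _, hr₁⟩ := h₁
  obtain ⟨_, hw, hr₂⟩ := h₂
  exact ⟨hu, hw, hr₁.trans hr₂⟩

theorem compIn_subset : X.compIn s v ⊆ s := fun _ h => h.2.1

theorem compIn_eq_of_mem (h : w ∈ X.compIn s v) : X.compIn s w = X.compIn s v := by
  have h : X.ReachIn s v w := h
  exact Set.ext fun _ => ⟨h.trans, h.symm.trans⟩

theorem compIn_eq_of_card_lt_two_mul_ncard {G : Finset V} (hsG : s ⊆ G)
    (hv : #G < 2 * (X.compIn s v).ncard) (hw : #G < 2 * (X.compIn s w).ncard) :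
    X.compIn s v = X.compIn s w := by
  have hsub : ∀ x, X.compIn s x ⊆ G := fun _ => compIn_subset.trans hsG
  have hmeet : ¬Disjoint (X.compIn s v) (X.compIn s w) := fun hd => by
    have hunion := Set.ncard_union_eq hd (G.finite_toSet.subset (hsub v))
      (G.finite_toSet.subset (hsub w))
    have hle := Set.ncard_le_card_of_subset_finset (Set.union_subset (hsub v) (hsub w))
    omega
  obtain ⟨x, hxv, hxw⟩ := Set.not_disjoint_iff.mp hmeet
  exact (compIn_eq_of_mem hxv).symm.trans (compIn_eq_of_mem hxw)

section Levels

variable {f : V → ℤ} {t : ℤ}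

theorem ReachIn.lt_of_lt (hf : ∀ p q, X.Adj p q → |f p - f q| ≤ 1) (hst : ∀ x ∈ s, f x ≠ t)
    (h : X.ReachIn s v w) (hv : f v < t) : f w < t := by
  obtain ⟨hvs, hws, hr⟩ := h
  rw [reachable_iff_reflTransGen] at hr
  suffices ∀ z : s, Relation.ReflTransGen (X.induce s).Adj ⟨v, hvs⟩ z → f z < t from
    this ⟨w, hws⟩ hr
  intro z hz
  induction hz with
  | refl => exact hv
  | @tail x y _ hxy ih =>
    have := abs_le.mp (hf x y hxy)
    have := hst y y.2
    omega

theorem ReachIn.lt_iff_lt (hf : ∀ p q, X.Adj p q → |f p - f q| ≤ 1) (hst : ∀ x ∈ s, f x ≠ t)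
    (h : X.ReachIn s v w) : f v < t ↔ f w < t :=
  ⟨h.lt_of_lt hf hst, h.symm.lt_of_lt hf hst⟩

theorem compIn_subset_band (hf : ∀ p q, X.Adj p q → |f p - f q| ≤ 1) {G : Finset V}
    (hsG : s ⊆ G) {t₁ t₂ : ℤ} (hst : ∀ x ∈ s, f x ≠ t₁ ∧ f x ≠ t₂)
    (hlo : 2 * #{x ∈ G | f x < t₁} ≤ #G) (hhi : 2 * #{x ∈ G | t₂ < f x} ≤ #G)
    (hbig : #G < 2 * (X.compIn s v).ncard) :
    ∀ p ∈ X.compIn s v, t₁ < f p ∧ f p < t₂ := by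
  intro p hp
  rw [← compIn_eq_of_mem hp] at hbig
  have h₁ : ∀ x ∈ s, f x ≠ t₁ := fun x hx => (hst x hx).1
  have h₂ : ∀ x ∈ s, f x ≠ t₂ := fun x hx => (hst x hx).2
  have hnot_lo : ¬f p < t₁ := fun hlt => by
    have hsub : X.compIn s p ⊆ ({x ∈ G | f x < t₁} : Finset V) := fun x hx =>
      mem_filter.mpr ⟨hsG (compIn_subset hx), ReachIn.lt_of_lt hf h₁ hx hlt⟩
    have := Set.ncard_le_card_of_subset_finset hsub
    omega
  have hnot_hi : ¬t₂ < f p := fun hlt => by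
    have hsub : X.compIn s p ⊆ ({x ∈ G | t₂ < f x} : Finset V) := fun x hx => by
      have hxs : x ∈ s := compIn_subset hx
      have hiff := ReachIn.lt_iff_lt hf h₂ (show X.ReachIn s p x from hx)
      have := h₂ x hxs
      exact mem_filter.mpr ⟨hsG hxs, by omega⟩
    have := Set.ncard_le_card_of_subset_finset hsub
    omega
  have := hst p (compIn_subset hp)
  omega

end Levels

end SimpleGraph

theorem SierpGraph.abs_sub_fst_le_one {p q : ℕ × ℕ} (h : SierpGraph.Adj p q) :
    |(p.1 : ℤ) - q.1| ≤ 1 := by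
  have := h.2.2
  have := abs_nonneg ((p.2 : ℤ) - q.2)
  omega

theorem SierpGraph.abs_sub_snd_le_one {p q : ℕ × ℕ} (h : SierpGraph.Adj p q) :
    |(p.2 : ℤ) - q.2| ≤ 1 := by
  have := h.2.2
  have := abs_nonneg ((p.1 : ℤ) - q.1)
  omega

namespace Finset

variable {α : Type*} (G : Finset α)

theorem sum_card_filter_eq_le_card {ι β : Type*} [DecidableEq β] (f : α → β) {e : ι → β}
    (he : Injective e) (I : Finset ι) : ∑ i ∈ I, #{x ∈ G | f x = e i} ≤ #G :=
  calc ∑ i ∈ I, #{x ∈ G | f x = e i}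
      = ∑ j ∈ I.map ⟨e, he⟩, #{x ∈ G | f x = j} :=
        (sum_map I ⟨e, he⟩ fun j => #{x ∈ G | f x = j}).symm
    _ = #{x ∈ G | f x ∈ I.map ⟨e, he⟩} := sum_card_fiberwise_eq_card_filter _ _ _
    _ ≤ #G := card_filter_le _ _

theorem exists_median (f : α → ℕ) :
    ∃ m, 2 * #{x ∈ G | f x < m} ≤ #G ∧ 2 * #{x ∈ G | m < f x} ≤ #G := by
  have hex : ∃ m, 2 * #{x ∈ G | m < f x} ≤ #G :=
    ⟨G.sup f, by rw [filter_false_of_mem fun x hx => not_lt.mpr (le_sup hx)]; simp⟩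
  refine ⟨Nat.find hex, ?_, Nat.find_spec hex⟩
  rcases Nat.eq_zero_or_pos (Nat.find hex) with h0 | hpos
  · simp [h0]
  · have hmin := Nat.find_min hex (Nat.sub_one_lt hpos.ne')
    have hsplit := card_filter_add_card_filter_not (s := G) (fun x => f x < Nat.find hex)
    have hcongr : #{x ∈ G | ¬f x < Nat.find hex} = #{x ∈ G | Nat.find hex - 1 < f x} :=
      congrArg card (filter_congr fun x _ => by omega)
    omega

theorem exists_sparse_level_pair (f : α → ℤ) (a : ℤ) {L c : ℕ} (hG : #G < L * c) :
    ∃ i < L, #{x ∈ G | f x = a + i} + #{x ∈ G | f x = a + (L + 1 + i : ℕ)} < c := by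
  set g : ℕ → ℕ := fun i => #{x ∈ G | f x = a + i}
  have hsum : ∑ i ∈ range L, (g i + g (L + 1 + i)) ≤ #G :=
    calc ∑ i ∈ range L, (g i + g (L + 1 + i)) ≤ ∑ i ∈ range (L + 1 + L), g i := by
          rw [sum_add_distrib, sum_range_add, sum_range_succ]; omega
      _ ≤ #G := G.sum_card_filter_eq_le_card f (e := fun i : ℕ => a + i)
          ((add_right_injective a).comp Nat.cast_injective) _
  obtain ⟨i, hi, hlt⟩ := exists_lt_of_sum_lt (s := range L) (g := fun _ => c)
    (by simpa using hsum.trans_lt hG)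
  exact ⟨i, mem_range.mp hi, hlt⟩

theorem exists_sparse_band (f : α → ℕ) {L c : ℕ} (hG : #G < L * c) :
    ∃ t : ℤ, #{x ∈ G | (f x : ℤ) = t} + #{x ∈ G | (f x : ℤ) = t + L + 1} < c ∧
      2 * #{x ∈ G | (f x : ℤ) < t} ≤ #G ∧ 2 * #{x ∈ G | t + L + 1 < f x} ≤ #G := by
  obtain ⟨m, hlo, hhi⟩ := G.exists_median f
  obtain ⟨i, hi, hcost⟩ := G.exists_sparse_level_pair (fun x => (f x : ℤ)) (m - L + 1) hG
  refine ⟨m - L + 1 + i, ?_, ?_, ?_⟩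
  · convert hcost using 5
    push_cast
    ring
  · refine le_trans (Nat.mul_le_mul_left 2 (card_le_card fun x hx => ?_)) hlo
    rw [mem_filter] at hx ⊢
    exact ⟨hx.1, by omega⟩
  · refine le_trans (Nat.mul_le_mul_left 2 (card_le_card fun x hx => ?_)) hhi
    rw [mem_filter] at hx ⊢
    exact ⟨hx.1, by omega⟩

end Finset

theorem pre_square_cut_general (k q r : ℕ) (hq : q < 6) (hr : r < 6 ^ k)
    (G : Finset (ℕ × ℕ))
    (hcard : G.card = q * 6 ^ k + r) :
    ∃ T : Finset (ℕ × ℕ), T ⊆ G ∧ T.card ≤ 24 * 2 ^ k ∧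
      (∀ v w : ℕ × ℕ,
          G.card < 2 * (SierpGraph.compIn (↑(G \ T)) v).ncard →
          G.card < 2 * (SierpGraph.compIn (↑(G \ T)) w).ncard →
          SierpGraph.compIn (↑(G \ T)) v = SierpGraph.compIn (↑(G \ T)) w) ∧
      ∃ a c : ℤ, ∀ v : ℕ × ℕ,
        G.card < 2 * (SierpGraph.compIn (↑(G \ T)) v).ncard →
        ∀ p ∈ SierpGraph.compIn (↑(G \ T)) v,
          a ≤ (p.1 : ℤ) ∧ (p.1 : ℤ) ≤ a + 3 ^ k ∧ c ≤ (p.2 : ℤ) ∧ (p.2 : ℤ) ≤ c + 3 ^ k := by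
  have hG : #G < 3 ^ k * (12 * 2 ^ k) := by
    have h6 : 3 ^ k * (12 * 2 ^ k) = 12 * 6 ^ k := by
      rw [show 6 = 3 * 2 from rfl, mul_pow]; ring
    have : q * 6 ^ k ≤ 5 * 6 ^ k := Nat.mul_le_mul_right _ (by omega)
    omega
  obtain ⟨t, hxcost, hxlo, hxhi⟩ := G.exists_sparse_band Prod.fst hG
  obtain ⟨u, hycost, hylo, hyhi⟩ := G.exists_sparse_band Prod.snd hG
  push_cast at hxcost hxhi hycost hyhi
  set T := {p ∈ G | ((p.1 : ℤ) = t ∨ (p.1 : ℤ) = t + 3 ^ k + 1) ∨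
    ((p.2 : ℤ) = u ∨ (p.2 : ℤ) = u + 3 ^ k + 1)}
  have hTcard : #T ≤ 24 * 2 ^ k := by
    simp only [T, filter_or]
    grw [card_union_le, card_union_le, card_union_le]
    omega
  have hsG : (↑(G \ T) : Set (ℕ × ℕ)) ⊆ G := fun _ hp => (mem_sdiff.mp hp).1
  have hoff : ∀ p ∈ (↑(G \ T) : Set (ℕ × ℕ)),
      ((p.1 : ℤ) ≠ t ∧ (p.1 : ℤ) ≠ t + 3 ^ k + 1) ∧
        ((p.2 : ℤ) ≠ u ∧ (p.2 : ℤ) ≠ u + 3 ^ k + 1) := fun p hp => by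
    obtain ⟨hpG, hpT⟩ := mem_sdiff.mp hp
    simp only [T, mem_filter, not_and, not_or] at hpT
    exact hpT hpG
  refine ⟨T, filter_subset _ _, hTcard,
    fun v w => SimpleGraph.compIn_eq_of_card_lt_two_mul_ncard hsG, t + 1, u + 1,
    fun v hv p hp => ?_⟩
  have hx := SimpleGraph.compIn_subset_band (fun _ _ => SierpGraph.abs_sub_fst_le_one) hsG
    (fun p hp => (hoff p hp).1) hxlo hxhi hv p hp
  have hy := SimpleGraph.compIn_subset_band (fun _ _ => SierpGraph.abs_sub_snd_le_one) hsG
    (fun p hp => (hoff p hp).2) hylo hyhi hv p hp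
  omega

/-- Any finite subgraph `G` of the infinite Sierpinski graph on `q·6^k + r` vertices
(`0 ≤ q < 6`, `0 ≤ r < 6^k`) admits a vertex set `T` with `|T| ≤ 24·2^k` such that `G − T`
has at most one connected component with more than `|G|/2` vertices, and any such component
is contained in a square of side length `3^k`. -/
theorem pre_square_cut (k q r : ℕ) (hq : q < 6) (hr : r < 6 ^ k)
    (G : Finset (ℕ × ℕ)) (hmem : ∀ p ∈ G, SierpMem p)
    (hcard : G.card = q * 6 ^ k + r) :
    ∃ T : Finset (ℕ × ℕ), T ⊆ G ∧ T.card ≤ 24 * 2 ^ k ∧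
      (∀ v w : ℕ × ℕ,
          G.card < 2 * (SierpGraph.compIn (↑(G \ T)) v).ncard →
          G.card < 2 * (SierpGraph.compIn (↑(G \ T)) w).ncard →
          SierpGraph.compIn (↑(G \ T)) v = SierpGraph.compIn (↑(G \ T)) w) ∧
      ∃ a c : ℤ, ∀ v : ℕ × ℕ,
        G.card < 2 * (SierpGraph.compIn (↑(G \ T)) v).ncard →
        ∀ p ∈ SierpGraph.compIn (↑(G \ T)) v,
          a ≤ (p.1 : ℤ) ∧ (p.1 : ℤ) ≤ a + 3 ^ k ∧ c ≤ (p.2 : ℤ) ∧ (p.2 : ℤ) ≤ c + 3 ^ k :=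
  pre_square_cut_general k q r hq hr G hcard
end
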